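/- arXiv:0904.3742 — 4 statements merged into one kernel-verified Lean document; each statement's English description precedes it below -/
import Mathlib

section
/- Let t ∈ (0, π/2) with t ≠ π/4, and let s satisfy 3 cos(s-t) = (cos 2t) cos(s+t) with cos(s+t) < 0. Then λ_∞ := -(3/8) tan(s+t) equals (1/4) cot 2t. -/
/-! Put `u = s + t`, so that `s - t = u - 2t`. Expanding `cos (u - 2t)` turns the hypothesis into
`3 sin u sin 2t = -2 cos 2t cos u`, i.e. `tan u = -(2/3) cot 2t`, which is the claim. -/

open Real

theorem tan_eq_of_three_mul_cos_sub_eq {u a : ℝ} (hu : cos u ≠ 0) (ha : sin a ≠ 0)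
    (h : 3 * cos (u - a) = cos a * cos u) :
    tan u = -(2 / 3) * (cos a / sin a) := by
  rw [cos_sub] at h
  have hsin : 3 * (sin u * sin a) = -2 * (cos a * cos u) := by linarith
  rw [tan_eq_sin_div_cos]
  field_simp
  linarith

theorem stmt_9_general (t s : ℝ) (ht : t ∈ Set.Ioo 0 (Real.pi / 2))
    (hc : Real.cos (s + t) < 0)
    (h : 3 * Real.cos (s - t) = Real.cos (2 * t) * Real.cos (s + t)) :
    -(3 / 8) * Real.tan (s + t) = (1 / 4) * (Real.cos (2 * t) / Real.sin (2 * t)) := by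
  have hsin : sin (2 * t) ≠ 0 :=
    (sin_pos_of_pos_of_lt_pi (by linarith [ht.1]) (by linarith [ht.2])).ne'
  rw [show s - t = (s + t) - 2 * t by ring] at h
  rw [tan_eq_of_three_mul_cos_sub_eq hc.ne hsin h]
  ring

theorem stmt_9 (t s : ℝ) (ht : t ∈ Set.Ioo 0 (Real.pi / 2)) (ht4 : t ≠ Real.pi / 4)
    (hc : Real.cos (s + t) < 0)
    (h : 3 * Real.cos (s - t) = Real.cos (2 * t) * Real.cos (s + t)) :
    -(3 / 8) * Real.tan (s + t) = (1 / 4) * (Real.cos (2 * t) / Real.sin (2 * t)) :=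
  stmt_9_general t s ht hc h
end

section
/- For t ∈ (0, π/2), the Schwarzian derivative S(z) = (g'/g)' - (1/2)(g'/g)², where g = f_∞′(z) = (1 - 2(cos 2t)z² + z⁴)^{-1/2}, equals 2(cos 2t + (cos² 2t - 3)z² + (cos 2t)z⁴)/(1 - 2(cos 2t)z² + z⁴)² on the interval where 1 - 2(cos 2t)z² + z⁴ > 0. -/
/-!
With `Q(u) = 1 - 2 c u² + u⁴` and `g = Q^(-1/2)`, the logarithmic derivative `g'/g = -Q'/(2Q)` is
rational. It agrees with that rational function on the open set `{Q > 0}`, hence near `z`, so its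
derivative at `z` is given by the quotient rule, and the identity reduces to polynomial algebra.
-/

open Real Filter Topology

theorem deriv_rpow_const_div_rpow {f : ℝ → ℝ} {f' x : ℝ} (p : ℝ)
    (hf : HasDerivAt f f' x) (hx : 0 < f x) :
    deriv (fun v => f v ^ p) x / f x ^ p = p * f' / f x := by
  have hpow : f x ^ p ≠ 0 := (rpow_pos_of_pos hx p).ne'
  rw [(hf.rpow_const (Or.inl hx.ne')).deriv, rpow_sub hx, rpow_one]
  field_simp

theorem hasDerivAt_one_sub_two_mul_sq_add_pow_four (c u : ℝ) :
    HasDerivAt (fun v : ℝ => 1 - 2 * c * v ^ 2 + v ^ 4) (4 * u ^ 3 - 4 * c * u) u := by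
  refine (((hasDerivAt_const u (1 : ℝ)).sub ((hasDerivAt_pow 2 u).const_mul (2 * c))).add
    (hasDerivAt_pow 4 u)).congr_deriv ?_
  norm_num
  ring

theorem hasDerivAt_four_mul_pow_three_sub (c u : ℝ) :
    HasDerivAt (fun v : ℝ => 4 * v ^ 3 - 4 * c * v) (12 * u ^ 2 - 4 * c) u := by
  refine (((hasDerivAt_pow 3 u).const_mul 4).sub
    ((hasDerivAt_id u).const_mul (4 * c))).congr_deriv ?_
  norm_num
  ring

theorem stmt_11_general (t : ℝ) (z : ℝ)
    (hq : 0 < 1 - 2 * Real.cos (2 * t) * z ^ 2 + z ^ 4) :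
    deriv (fun w : ℝ =>
        deriv (fun u : ℝ => (1 - 2 * Real.cos (2 * t) * u ^ 2 + u ^ 4) ^ (-(1 : ℝ) / 2)) w /
          (1 - 2 * Real.cos (2 * t) * w ^ 2 + w ^ 4) ^ (-(1 : ℝ) / 2)) z -
      (1 / 2) * (deriv (fun u : ℝ => (1 - 2 * Real.cos (2 * t) * u ^ 2 + u ^ 4) ^ (-(1 : ℝ) / 2)) z /
          (1 - 2 * Real.cos (2 * t) * z ^ 2 + z ^ 4) ^ (-(1 : ℝ) / 2)) ^ 2 =
    2 * (Real.cos (2 * t) + (Real.cos (2 * t) ^ 2 - 3) * z ^ 2 + Real.cos (2 * t) * z ^ 4) /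
      (1 - 2 * Real.cos (2 * t) * z ^ 2 + z ^ 4) ^ 2 := by
  set c := Real.cos (2 * t)
  have hlogDeriv : ∀ u, 0 < 1 - 2 * c * u ^ 2 + u ^ 4 →
      deriv (fun v : ℝ => (1 - 2 * c * v ^ 2 + v ^ 4) ^ (-(1 : ℝ) / 2)) u /
          (1 - 2 * c * u ^ 2 + u ^ 4) ^ (-(1 : ℝ) / 2) =
        -(1 : ℝ) / 2 * (4 * u ^ 3 - 4 * c * u) / (1 - 2 * c * u ^ 2 + u ^ 4) :=
    fun u hu => deriv_rpow_const_div_rpow _ (hasDerivAt_one_sub_two_mul_sq_add_pow_four c u) hu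
  have hpos : ∀ᶠ u in 𝓝 z, 0 < 1 - 2 * c * u ^ 2 + u ^ 4 :=
    continuousAt_const.eventually_lt (by fun_prop) hq
  have hratio : HasDerivAt
      (fun u => -(1 : ℝ) / 2 * (4 * u ^ 3 - 4 * c * u) / (1 - 2 * c * u ^ 2 + u ^ 4)) _ z :=
    ((hasDerivAt_four_mul_pow_three_sub c z).const_mul _).div
      (hasDerivAt_one_sub_two_mul_sq_add_pow_four c z) hq.ne'
  rw [EventuallyEq.deriv_eq (hpos.mono hlogDeriv), hlogDeriv z hq, hratio.deriv]
  field_simp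
  ring

theorem stmt_11 (t : ℝ) (ht : t ∈ Set.Ioo 0 (Real.pi / 2)) (z : ℝ)
    (hq : 0 < 1 - 2 * Real.cos (2 * t) * z ^ 2 + z ^ 4) :
    deriv (fun w : ℝ =>
        deriv (fun u : ℝ => (1 - 2 * Real.cos (2 * t) * u ^ 2 + u ^ 4) ^ (-(1 : ℝ) / 2)) w /
          (1 - 2 * Real.cos (2 * t) * w ^ 2 + w ^ 4) ^ (-(1 : ℝ) / 2)) z -
      (1 / 2) * (deriv (fun u : ℝ => (1 - 2 * Real.cos (2 * t) * u ^ 2 + u ^ 4) ^ (-(1 : ℝ) / 2)) z /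
          (1 - 2 * Real.cos (2 * t) * z ^ 2 + z ^ 4) ^ (-(1 : ℝ) / 2)) ^ 2 =
    2 * (Real.cos (2 * t) + (Real.cos (2 * t) ^ 2 - 3) * z ^ 2 + Real.cos (2 * t) * z ^ 4) /
      (1 - 2 * Real.cos (2 * t) * z ^ 2 + z ^ 4) ^ 2 :=
  stmt_11_general t z hq
end

section
/- For t ∈ (0, π/2) and λ ∈ ℝ, with a = e^{it}, ψ₀(z) = (3/2)(a²/(z²-a²)² + ā²/(z²-ā²)²), ψ₁(z) = -i(1/(z²-a²) - 1/(z²-ā²)), and R_{t,λ} = 2ψ₀ - 2λψ₁, one has R_{π/2 - t, -λ}(iz) = -R_{t,λ}(z) for all z ∈ ℂ with z² ≠ ±a², ±ā² as appropriate. -/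
open Real Complex

noncomputable def Rparam (a : ℂ) (μ : ℝ) (w : ℂ) : ℂ :=
  2 * ((3 / 2) * (a ^ 2 / (w ^ 2 - a ^ 2) ^ 2 +
      ((starRingEnd ℂ) a) ^ 2 / (w ^ 2 - ((starRingEnd ℂ) a) ^ 2) ^ 2)) -
  2 * (μ : ℂ) * (-Complex.I * (1 / (w ^ 2 - a ^ 2) -
      1 / (w ^ 2 - ((starRingEnd ℂ) a) ^ 2)))

/-! Since `exp (I * (π/2 - t)) = I * conj a` and `(I * z)^2 = -z^2`, the substitution replaces
`a^2, conj a^2, z^2` by `-conj a^2, -a^2, -z^2`: the double-pole part `ψ₀` changes sign, the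
simple-pole part `ψ₁` is unchanged, and `λ ↦ -λ` makes the whole expression change sign. -/

theorem exp_I_mul_pi_div_two_sub (t : ℝ) :
    exp (I * (π / 2 - t)) = I * (starRingEnd ℂ) (exp (I * t)) := by
  rw [← exp_conj, map_mul, conj_I, conj_ofReal, mul_sub, Complex.exp_sub,
    mul_comm I (π / 2 : ℂ), exp_mul_I, Complex.cos_pi_div_two, Complex.sin_pi_div_two, neg_mul,
    Complex.exp_neg, div_eq_mul_inv]
  ring

theorem Rparam_I_mul_conj (a : ℂ) (μ : ℝ) (w : ℂ) :
    Rparam (I * (starRingEnd ℂ) a) (-μ) (I * w) = -Rparam a μ w := by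
  have sq_I_mul : ∀ x : ℂ, (I * x) ^ 2 = -x ^ 2 := fun x => by rw [mul_pow, I_sq]; ring
  have neg_sub_neg_sq : ∀ x y : ℂ, -x ^ 2 - -y ^ 2 = -(x ^ 2 - y ^ 2) := fun x y => by ring
  simp only [Rparam, map_mul, conj_I, conj_conj, neg_mul, neg_sq, sq_I_mul, neg_sub_neg_sq,
    ofReal_neg, div_neg]
  ring

theorem stmt_15_general (t lam : ℝ) (z : ℂ) :
    Rparam (Complex.exp (Complex.I * (Real.pi / 2 - t))) (-lam) (Complex.I * z) =
      -Rparam (Complex.exp (Complex.I * t)) lam z := by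
  rw [exp_I_mul_pi_div_two_sub, Rparam_I_mul_conj]

theorem stmt_15 (t lam : ℝ) (ht : t ∈ Set.Ioo 0 (Real.pi / 2)) (z : ℂ)
    (h1 : z ^ 2 ≠ (Complex.exp (Complex.I * t)) ^ 2)
    (h2 : z ^ 2 ≠ ((starRingEnd ℂ) (Complex.exp (Complex.I * t))) ^ 2)
    (h3 : (Complex.I * z) ^ 2 ≠ (Complex.exp (Complex.I * (Real.pi / 2 - t))) ^ 2)
    (h4 : (Complex.I * z) ^ 2 ≠ ((starRingEnd ℂ) (Complex.exp (Complex.I * (Real.pi / 2 - t)))) ^ 2) :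
    Rparam (Complex.exp (Complex.I * (Real.pi / 2 - t))) (-lam) (Complex.I * z) =
      -Rparam (Complex.exp (Complex.I * t)) lam z :=
  stmt_15_general t lam z
end

section
/- Let t ∈ (0, π/2), y_∞(z) = (1 - 2(cos 2t)z² + z⁴)^{1/4}, ψ₁(z) = 2 sin 2t/(z⁴ - 2(cos 2t)z² + 1), and let X̃ₙ be the iterated integrals determined by the pair (ψ₁ y_∞², 1/y_∞²) (i.e., X̃₁ ≡ 1, X̃ₙ(z) = ∫₀^z X̃_{n-1} qₙ₋₁ with q₁ = ψ₁y_∞², q₂ = 1/y_∞², alternating). Then the coefficients aₙ = -2 Σ_{k=0}^{n} X̃_{2k}(1) X̃_{2(n-k)-1}(1) satisfy a₀ = 0 and aₙ ≤ 0 for all n ≥ 1 (with the convention X̃₀ ≡ 1, X̃₋₁ ≡ 0). -/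
/-!
Both weights `ψ₁ y_∞²` and `1 / y_∞²` are nonnegative on `[0, ∞)`: `sin 2t > 0`, and
`z⁴ - 2 (cos 2t) z² + 1 = (z² - cos 2t)² + sin² 2t`. Hence every iterated integral `X̃ₙ`
is nonnegative on `[0, ∞)`, so each `aₙ` is `-2` times a sum of nonnegative products.
-/

open Real intervalIntegral

theorem iteratedIntegral_nonneg {X q : ℤ → ℝ → ℝ} (hq : ∀ n ζ, 0 ≤ q n ζ)
    (hbase : ∀ n, -1 ≤ n → n ≤ 1 → ∀ z, 0 ≤ z → 0 ≤ X n z)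
    (hrec : ∀ n : ℤ, 2 ≤ n → ∀ z, X n z = ∫ ζ in (0 : ℝ)..z, X (n - 1) ζ * q n ζ) :
    ∀ n, -1 ≤ n → ∀ z, 0 ≤ z → 0 ≤ X n z := by
  refine Int.leInduction (hbase (-1) le_rfl (by norm_num)) fun n hn ih z hz => ?_
  rcases lt_or_ge n 1 with hn1 | hn1
  · exact hbase (n + 1) (by omega) (by omega) z hz
  rw [hrec (n + 1) (by omega), add_sub_cancel_right]
  exact integral_nonneg hz fun ζ hζ => mul_nonneg (ih ζ hζ.1) (hq (n + 1) ζ)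

theorem quartic_nonneg {c : ℝ} (hc : c ^ 2 ≤ 1) (ζ : ℝ) : 0 ≤ ζ ^ 4 - 2 * c * ζ ^ 2 + 1 := by
  nlinarith [sq_nonneg (ζ ^ 2 - c)]

theorem stmt_16 (t : ℝ) (ht : t ∈ Set.Ioo 0 (Real.pi / 2))
    (X : ℤ → ℝ → ℝ)
    (hXm : ∀ z : ℝ, X (-1) z = 0)
    (hX0 : ∀ z : ℝ, X 0 z = 1)
    (hX1 : ∀ z : ℝ, X 1 z = 1)
    (hrec : ∀ n : ℤ, 2 ≤ n → ∀ z : ℝ,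
      X n z = ∫ ζ in (0 : ℝ)..z,
        X (n - 1) ζ *
          (if (n - 1) % 2 = 1 then
            (2 * Real.sin (2 * t) / (ζ ^ 4 - 2 * Real.cos (2 * t) * ζ ^ 2 + 1)) *
              ((1 - 2 * Real.cos (2 * t) * ζ ^ 2 + ζ ^ 4) ^ ((1 : ℝ) / 4)) ^ 2
          else
            1 / ((1 - 2 * Real.cos (2 * t) * ζ ^ 2 + ζ ^ 4) ^ ((1 : ℝ) / 4)) ^ 2)) :
    (-2 * ∑ k ∈ Finset.range 1, X (2 * (k : ℤ)) 1 * X (2 * ((0 : ℤ) - k) - 1) 1 = 0) ∧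
    ∀ n : ℕ, 1 ≤ n →
      -2 * ∑ k ∈ Finset.range (n + 1), X (2 * (k : ℤ)) 1 * X (2 * ((n : ℤ) - k) - 1) 1 ≤ 0 := by
  have hsin : 0 ≤ sin (2 * t) :=
    sin_nonneg_of_nonneg_of_le_pi (by linarith [ht.1]) (by linarith [ht.2])
  have hquartic := quartic_nonneg (cos_sq_le_one (2 * t))
  have hX : ∀ n, -1 ≤ n → 0 ≤ X n 1 := by
    refine fun n hn => iteratedIntegral_nonneg (fun n ζ => ?_) (fun n hn hn' z _ => ?_) hrec
      n hn 1 zero_le_one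
    · split_ifs
      · exact mul_nonneg (div_nonneg (by linarith) (hquartic ζ)) (sq_nonneg _)
      · positivity
    · obtain rfl | rfl | rfl : n = -1 ∨ n = 0 ∨ n = 1 := by omega
      all_goals simp [hXm, hX0, hX1]
  refine ⟨by simp [hXm], fun n _ => ?_⟩
  have hsum : 0 ≤ ∑ k ∈ Finset.range (n + 1), X (2 * (k : ℤ)) 1 * X (2 * ((n : ℤ) - k) - 1) 1 :=
    Finset.sum_nonneg fun k hk => by
      have hkn : (k : ℤ) ≤ n := by have := Finset.mem_range.mp hk; omega
      exact mul_nonneg (hX _ (by omega)) (hX _ (by omega))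
  linarith
end
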